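/- arXiv:2511.12094 — 2 statements merged into one kernel-verified Lean document; each statement's English description precedes it below -/
import Mathlib

section
/- Let J be a bounded open interval, x₀ ∈ J̄, and f ∈ W^{1,2}(J) nonvanishing on J̄ with f(x₀)=1. Define f₁(x) = f(x)·∫_{x₀}^x dt/f²(t). Then f₁ ∈ W^{1,2}(J) and the modified Wronskian f·f₁' − f'·f₁ is identically equal to 1 on J. -/
/-!
A function `f` with `f x = f a + ∫_a^x f'` is absolutely continuous, hence bounded on
`[a, b]`, and the primitive `G x = ∫_{x₀}^x f⁻²` is `C¹` because `f` does not vanish.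
Integration by parts for absolutely continuous functions, with the Lebesgue differentiation
theorem identifying their a.e. derivatives, shows that `f * G` is again such a primitive, of
`f' G + f f⁻² = f' G + f⁻¹`; boundedness of `f`, `G`, `f⁻¹` gives the `L²` bounds. The
Wronskian identity is then pointwise algebra: `f (f' G + f⁻¹) - f' (f G) = f f⁻¹ = 1`.
-/

open MeasureTheory Set intervalIntegral

/-- `g ∈ W^{1,2}(a,b)` with (a concrete representative of) distributional derivative `g'`. -/
def IsW12 (a b : ℝ) (g g' : ℝ → ℝ) : Prop :=
  MemLp g 2 (volume.restrict (Set.Ioo a b)) ∧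
  MemLp g' 2 (volume.restrict (Set.Ioo a b)) ∧
  IntervalIntegrable g' MeasureTheory.volume a b ∧
  ∀ x ∈ Set.Icc a b, g x = g a + ∫ t in a..x, g' t

theorem ContinuousOn.memLp_top_restrict {X E : Type*} [TopologicalSpace X] [MeasurableSpace X]
    [OpensMeasurableSpace X] [NormedAddCommGroup E] [SecondCountableTopologyEither X E]
    {μ : Measure X} {s K : Set X} {h : X → E}
    (hh : ContinuousOn h K) (hK : IsCompact K) (hs : MeasurableSet s) (hsK : s ⊆ K) :
    MemLp h ⊤ (μ.restrict s) := by
  obtain ⟨C, hC⟩ := hK.exists_bound_of_continuousOn hh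
  exact memLp_top_of_bound ((hh.mono hsK).aestronglyMeasurable hs) C
    ((ae_restrict_mem hs).mono fun x hx => hC x (hsK hx))

section

variable {a b : ℝ} {u u' v v' : ℝ → ℝ}

theorem continuousOn_of_eq_add_integral
    (hu' : IntervalIntegrable u' volume a b)
    (hu : ∀ x ∈ Icc a b, u x = u a + ∫ t in a..x, u' t) :
    ContinuousOn u (Icc a b) :=
  (continuousOn_const.add ((continuousOn_primitive_interval' hu' left_mem_uIcc).mono
    Icc_subset_uIcc)).congr hu

theorem absolutelyContinuousOnInterval_const_add_integral (c : ℝ)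
    (hu' : IntervalIntegrable u' volume a b) :
    AbsolutelyContinuousOnInterval (fun x => c + ∫ t in a..x, u' t) a b :=
  (LipschitzWith.const c).lipschitzOnWith.absolutelyContinuousOnInterval.fun_add
    (hu'.absolutelyContinuousOnInterval_intervalIntegral left_mem_uIcc)

theorem mul_eq_add_integral_of_eq_add_integral
    (hu' : IntervalIntegrable u' volume a b) (hv' : IntervalIntegrable v' volume a b)
    (hu : ∀ x ∈ Icc a b, u x = u a + ∫ t in a..x, u' t)
    (hv : ∀ x ∈ Icc a b, v x = v a + ∫ t in a..x, v' t) :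
    ∀ x ∈ Icc a b, u x * v x = u a * v a + ∫ t in a..x, (u' t * v t + u t * v' t) := by
  intro x hx
  have hsub : uIcc a x ⊆ uIcc a b := uIcc_subset_uIcc_left (Icc_subset_uIcc hx)
  have hsub' : uIcc a x ⊆ Icc a b := uIcc_subset_Icc (left_mem_Icc.2 (hx.1.trans hx.2)) hx
  let U := fun y => u a + ∫ t in a..y, u' t
  let V := fun y => v a + ∫ t in a..y, v' t
  have hu'x := hu'.mono_set hsub
  have hv'x := hv'.mono_set hsub
  have hUV : ∫ t in a..x, deriv U t * V t + U t * deriv V t = U x * V x - U a * V a :=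
    (absolutelyContinuousOnInterval_const_add_integral (u a) hu'x).integral_deriv_mul_eq_sub
      (absolutelyContinuousOnInterval_const_add_integral (v a) hv'x)
  have hderiv : ∀ᵐ t, t ∈ uIoc a x →
      deriv U t * V t + U t * deriv V t = u' t * v t + u t * v' t := by
    filter_upwards [hu'x.ae_hasDerivAt_integral, hv'x.ae_hasDerivAt_integral] with t hut hvt ht
    have ht' : t ∈ uIcc a x := uIoc_subset_uIcc ht
    rw [((hut ht' a left_mem_uIcc).const_add (u a)).deriv,
      ((hvt ht' a left_mem_uIcc).const_add (v a)).deriv, hu t (hsub' ht'), hv t (hsub' ht')]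
  rw [integral_congr_ae hderiv] at hUV
  simp only [U, V, integral_same, add_zero, ← hu x hx, ← hv x hx] at hUV
  linarith

theorem IsW12.continuousOn (hu : IsW12 a b u u') : ContinuousOn u (Icc a b) :=
  continuousOn_of_eq_add_integral hu.2.2.1 hu.2.2.2

theorem isW12_of_continuousOn (hab : a ≤ b)
    (hu' : ContinuousOn u' (Icc a b)) (hu : ∀ x ∈ Icc a b, u x = u a + ∫ t in a..x, u' t) :
    IsW12 a b u u' := by
  have hu'int : IntervalIntegrable u' volume a b :=
    (hu'.mono (uIcc_of_le hab).subset).intervalIntegrable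
  have hmemLp {g : ℝ → ℝ} (hg : ContinuousOn g (Icc a b)) :
      MemLp g 2 (volume.restrict (Ioo a b)) :=
    (hg.memLp_top_restrict isCompact_Icc measurableSet_Ioo Ioo_subset_Icc_self).mono_exponent
      le_top
  exact ⟨hmemLp (continuousOn_of_eq_add_integral hu'int hu), hmemLp hu', hu'int, hu⟩

theorem IsW12.mul (hab : a ≤ b) (hu : IsW12 a b u u') (hv : IsW12 a b v v') :
    IsW12 a b (fun x => u x * v x) (fun x => u' x * v x + u x * v' x) := by
  have hbdd {g g' : ℝ → ℝ} (hg : IsW12 a b g g') : MemLp g ⊤ (volume.restrict (Ioo a b)) :=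
    hg.continuousOn.memLp_top_restrict isCompact_Icc measurableSet_Ioo Ioo_subset_Icc_self
  have hIcc : uIcc a b = Icc a b := uIcc_of_le hab
  refine ⟨(hbdd hv).mul' hu.1, ((hbdd hv).mul' hu.2.1).add (hv.2.1.mul' (hbdd hu)),
    (hu.2.2.1.mul_continuousOn (hIcc ▸ hv.continuousOn)).add
      (hv.2.2.1.continuousOn_mul (hIcc ▸ hu.continuousOn)),
    mul_eq_add_integral_of_eq_add_integral hu.2.2.1 hv.2.2.1 hu.2.2.2 hv.2.2.2⟩

theorem IsW12.congr_deriv {w' : ℝ → ℝ} (hab : a ≤ b) (hu : IsW12 a b u u')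
    (h : EqOn u' w' (Icc a b)) : IsW12 a b u w' := by
  obtain ⟨huL2, hu'L2, hu'int, hurep⟩ := hu
  refine ⟨huL2, hu'L2.ae_eq (ae_restrict_of_forall_mem measurableSet_Ioo fun x hx =>
    h (Ioo_subset_Icc_self hx)),
    hu'int.congr_uIoo (h.mono (uIoo_of_le hab ▸ Ioo_subset_Icc_self)), fun x hx => ?_⟩
  rw [hurep x hx, integral_congr (h.mono (uIcc_subset_Icc (left_mem_Icc.2 hab) hx))]

end

theorem stmt5_general (a b x₀ : ℝ) (hx₀ : x₀ ∈ Icc a b) (f f' : ℝ → ℝ)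
    (hf : IsW12 a b f f') (hne : ∀ x ∈ Icc a b, f x ≠ 0) :
    IsW12 a b (fun x => f x * ∫ t in x₀..x, (f t ^ 2)⁻¹)
      (fun x => f' x * (∫ t in x₀..x, (f t ^ 2)⁻¹) + (f x)⁻¹) ∧
    ∀ x ∈ Icc a b,
      f x * (f' x * (∫ t in x₀..x, (f t ^ 2)⁻¹) + (f x)⁻¹)
        - f' x * (f x * ∫ t in x₀..x, (f t ^ 2)⁻¹) = 1 := by
  have hab : a ≤ b := hx₀.1.trans hx₀.2
  have ha : a ∈ Icc a b := left_mem_Icc.2 hab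
  have hg : ContinuousOn (fun t => (f t ^ 2)⁻¹) (Icc a b) :=
    (hf.continuousOn.pow 2).inv₀ fun t ht => pow_ne_zero 2 (hne t ht)
  have hG : IsW12 a b (fun x => ∫ t in x₀..x, (f t ^ 2)⁻¹) (fun t => (f t ^ 2)⁻¹) :=
    isW12_of_continuousOn hab hg fun x hx =>
      (integral_add_adjacent_intervals (hg.mono (uIcc_subset_Icc hx₀ ha)).intervalIntegrable
        (hg.mono (uIcc_subset_Icc ha hx)).intervalIntegrable).symm
  refine ⟨(hf.mul hab hG).congr_deriv hab fun x hx => ?_, fun x hx => ?_⟩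
  · field_simp [hne x hx]
  · field_simp [hne x hx]
    ring

/-- for `f ∈ W^{1,2}` nonvanishing on `[a,b]` with `f x₀ = 1`, the Abel
solution `f₁(x) = f(x)·∫_{x₀}^x dt/f²(t)` belongs to `W^{1,2}(a,b)` (with derivative
`f₁' = f'·∫_{x₀}^x 1/f² + 1/f`) and the modified Wronskian `f·f₁' − f'·f₁` is
identically `1` on `J̄`. -/
theorem stmt5 (a b x₀ : ℝ) (hab : a < b) (hx₀ : x₀ ∈ Icc a b) (f f' : ℝ → ℝ)
    (hf : IsW12 a b f f') (hne : ∀ x ∈ Icc a b, f x ≠ 0) (hnorm : f x₀ = 1) :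
    IsW12 a b (fun x => f x * ∫ t in x₀..x, (f t ^ 2)⁻¹)
      (fun x => f' x * (∫ t in x₀..x, (f t ^ 2)⁻¹) + (f x)⁻¹) ∧
    ∀ x ∈ Icc a b,
      f x * (f' x * (∫ t in x₀..x, (f t ^ 2)⁻¹) + (f x)⁻¹)
        - f' x * (f x * ∫ t in x₀..x, (f t ^ 2)⁻¹) = 1 :=
  stmt5_general a b x₀ hx₀ f f' hf hne
end

section
/- Let J be a bounded interval, f ∈ W^{1,2}(J) nonvanishing, and define the formal powers φ_f^{(2k)} = (2k)!·f·X̃^{(2k)} and φ_f^{(2k+1)} = (2k+1)!·f·X^{(2k+1)} via the recursive integrals. Then for every ρ ∈ ℂ, the series Σ_{k=0}^∞ (iρ)^k φ_f^{(k)}(x)/k! converges absolutely and uniformly for x in J̄ and uniformly for ρ in every compact subset of ℂ. -/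
open MeasureTheory Set intervalIntegral Filter
open scoped Interval

/-!
Each recursive integral multiplies by a weight bounded by `C = max ‖f²‖_∞ ‖f⁻²‖_∞` and
integrates, so by induction `|X^{(k)}(x)|, |X̃^{(k)}(x)| ≤ C^k |x - x₀|^k / k!`. Hence
`|φ_f^{(k)}| ≤ ‖f‖_∞ (C |J|)^k`, and for `|ρ| ≤ R` the `k`-th term of the series is at most
`‖f‖_∞ (R C |J|)^k / k!`, the terms of a convergent exponential series; the Weierstrass
M-test concludes.
-/

section

open scoped Nat

theorem abs_intervalIntegral_le_mul_pow_abs_sub {Y : ℝ → ℝ} {x₀ x A : ℝ} {k : ℕ}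
    (hY : ∀ s ∈ Ι x₀ x, |Y s| ≤ A * |s - x₀| ^ k) :
    |∫ s in x₀..x, Y s| ≤ A * |x - x₀| ^ (k + 1) / (k + 1) := by
  have hg : IntegrableOn (fun s => A * |s - x₀| ^ k) (Ι x₀ x) :=
    (continuous_const.mul ((continuous_id.sub continuous_const).abs.pow k)).integrableOn_Ioc
  rw [← Real.norm_eq_abs, norm_integral_eq_norm_integral_uIoc]
  calc ‖∫ s in Ι x₀ x, Y s‖ ≤ ∫ s in Ι x₀ x, A * |s - x₀| ^ k :=
        norm_integral_le_of_norm_le hg (ae_restrict_of_forall_mem measurableSet_uIoc hY)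
    _ = A * |x - x₀| ^ (k + 1) / (k + 1) := by
        rw [MeasureTheory.integral_const_mul, integral_pow_abs_sub_uIoc, mul_div_assoc]

theorem continuousOn_primitive_Icc {Y : ℝ → ℝ} {a b x₀ : ℝ} (hx₀ : x₀ ∈ Icc a b)
    (hY : ContinuousOn Y (Icc a b)) :
    ContinuousOn (fun x => ∫ s in x₀..x, Y s) (Icc a b) := by
  have hab := hx₀.1.trans hx₀.2
  rw [← uIcc_of_le hab] at hY hx₀ ⊢
  exact continuousOn_primitive_interval' hY.intervalIntegrable hx₀

theorem iteratedIntegral_continuousOn_and_abs_le {a b x₀ C : ℝ} (hx₀ : x₀ ∈ Icc a b)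
    (Y w : ℕ → ℝ → ℝ) (hY0 : ∀ x, Y 0 x = 1)
    (hY : ∀ k x, Y (k + 1) x = ∫ s in x₀..x, Y k s * w (k + 1) s)
    (hw : ∀ k, ContinuousOn (w k) (Icc a b)) (hwC : ∀ k, ∀ s ∈ Icc a b, |w k s| ≤ C) (k : ℕ) :
    ContinuousOn (Y k) (Icc a b) ∧ ∀ x ∈ Icc a b, |Y k x| ≤ C ^ k * |x - x₀| ^ k / k ! := by
  induction k with
  | zero =>
    exact ⟨by simpa only [funext hY0] using continuousOn_const, fun x _ => by simp [hY0]⟩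
  | succ k ih =>
    obtain ⟨hcont, hbound⟩ := ih
    rw [funext (hY k)]
    refine ⟨continuousOn_primitive_Icc hx₀ (hcont.mul (hw (k + 1))), fun x hx => ?_⟩
    have hsub : Ι x₀ x ⊆ Icc a b := uIoc_subset_uIcc.trans (uIcc_subset_Icc hx₀ hx)
    calc |∫ s in x₀..x, Y k s * w (k + 1) s|
        ≤ C ^ (k + 1) / k ! * |x - x₀| ^ (k + 1) / (k + 1) := by
          refine abs_intervalIntegral_le_mul_pow_abs_sub fun s hs => ?_
          have hYs := hbound s (hsub hs)
          calc |Y k s * w (k + 1) s| = |Y k s| * |w (k + 1) s| := abs_mul _ _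
            _ ≤ C ^ k * |s - x₀| ^ k / k ! * C :=
                mul_le_mul hYs (hwC _ s (hsub hs)) (abs_nonneg _) ((abs_nonneg _).trans hYs)
            _ = C ^ (k + 1) / k ! * |s - x₀| ^ k := by ring
      _ = C ^ (k + 1) * |x - x₀| ^ (k + 1) / (k + 1)! := by
          rw [Nat.factorial_succ]
          push_cast
          field_simp

theorem alternatingIntegral_continuousOn_and_abs_le {a b x₀ C : ℝ} (hx₀ : x₀ ∈ Icc a b)
    {u v : ℝ → ℝ} (hu : ContinuousOn u (Icc a b)) (hv : ContinuousOn v (Icc a b))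
    (huC : ∀ s ∈ Icc a b, |u s| ≤ C) (hvC : ∀ s ∈ Icc a b, |v s| ≤ C)
    (Y : ℕ → ℝ → ℝ) (hY0 : ∀ x, Y 0 x = 1)
    (hY : ∀ k, 1 ≤ k → ∀ x, Y k x = ∫ s in x₀..x, Y (k - 1) s * (if Odd k then u s else v s))
    (k : ℕ) :
    ContinuousOn (Y k) (Icc a b) ∧ ∀ x ∈ Icc a b, |Y k x| ≤ C ^ k * |x - x₀| ^ k / k ! :=
  iteratedIntegral_continuousOn_and_abs_le hx₀ Y (fun k s => if Odd k then u s else v s) hY0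
    (fun k x => by simpa using hY (k + 1) (Nat.le_add_left 1 k) x)
    (fun k => by split_ifs; exacts [hu, hv])
    (fun k s hs => by split_ifs; exacts [huC s hs, hvC s hs]) k

theorem abs_factorial_mul_mul_le {a b x₀ x C M y z : ℝ} {k : ℕ} (hx₀ : x₀ ∈ Icc a b)
    (hx : x ∈ Icc a b) (hC : 0 ≤ C) (hy : |y| ≤ M) (hz : |z| ≤ C ^ k * |x - x₀| ^ k / k !) :
    |k ! * y * z| ≤ M * (C * (b - a)) ^ k := by
  have hdist : |x - x₀| ≤ b - a :=
    abs_sub_le_iff.mpr ⟨by linarith [hx.2, hx₀.1], by linarith [hx.1, hx₀.2]⟩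
  have hfac : (0 : ℝ) < k ! := by positivity
  calc |k ! * y * z| = k ! * |y| * |z| := by rw [abs_mul, abs_mul, abs_of_pos hfac]
    _ ≤ k ! * M * (C ^ k * (b - a) ^ k / k !) :=
        mul_le_mul (by gcongr) (hz.trans (by gcongr)) (abs_nonneg _)
          (mul_nonneg hfac.le ((abs_nonneg y).trans hy))
    _ = M * (C * (b - a)) ^ k := by rw [mul_pow]; field_simp

theorem summable_norm_and_tendstoUniformlyOn_exp_series {α : Type*} {K : Set ℂ}
    (hK : IsCompact K) {S : Set α} (c : ℕ → α → ℂ) {M L : ℝ}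
    (hc : ∀ k, ∀ x ∈ S, ‖c k x‖ ≤ M * L ^ k) :
    (∀ ρ ∈ K, ∀ x ∈ S, Summable fun k => ‖(Complex.I * ρ) ^ k * c k x / (k ! : ℂ)‖) ∧
      TendstoUniformlyOn
        (fun n (q : ℂ × α) => ∑ k ∈ Finset.range n, (Complex.I * q.1) ^ k * c k q.2 / (k ! : ℂ))
        (fun q => ∑' k, (Complex.I * q.1) ^ k * c k q.2 / (k ! : ℂ)) atTop (K ×ˢ S) := by
  obtain ⟨R, hR⟩ := hK.isBounded.exists_norm_le
  have hu : Summable fun k => M * ((R * L) ^ k / k !) :=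
    (Real.summable_pow_div_factorial _).mul_left M
  have hbound : ∀ k, ∀ q ∈ K ×ˢ S,
      ‖(Complex.I * q.1) ^ k * c k q.2 / (k ! : ℂ)‖ ≤ M * ((R * L) ^ k / k !) := by
    rintro k ⟨ρ, x⟩ ⟨hρ, hx⟩
    have hcx := hc k x hx
    rw [norm_div, norm_mul, norm_pow, norm_mul, Complex.norm_I, one_mul, Complex.norm_natCast]
    calc ‖ρ‖ ^ k * ‖c k x‖ / k ! ≤ R ^ k * (M * L ^ k) / k ! := by
          gcongr
          · exact pow_nonneg ((norm_nonneg ρ).trans (hR ρ hρ)) k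
          · exact hR ρ hρ
      _ = M * ((R * L) ^ k / k !) := by ring
  exact ⟨fun ρ hρ x hx => hu.of_nonneg_of_le (fun _ => norm_nonneg _)
      fun k => hbound k (ρ, x) ⟨hρ, hx⟩, tendstoUniformlyOn_tsum_nat hu hbound⟩

end

theorem stmt7_general (a b x₀ : ℝ) (hx₀ : x₀ ∈ Icc a b)
    (f : ℝ → ℝ) (hcont : ContinuousOn f (Icc a b))
    (hne : ∀ x ∈ Icc a b, f x ≠ 0)
    (X Xt : ℕ → ℝ → ℝ) (φ : ℕ → ℝ → ℝ)
    (hX0 : ∀ x, X 0 x = 1) (hXt0 : ∀ x, Xt 0 x = 1)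
    (hX : ∀ k, 1 ≤ k → ∀ x,
      X k x = ∫ s in x₀..x, X (k - 1) s * (if Odd k then (f s ^ 2)⁻¹ else f s ^ 2))
    (hXt : ∀ k, 1 ≤ k → ∀ x,
      Xt k x = ∫ s in x₀..x, Xt (k - 1) s * (if Odd k then f s ^ 2 else (f s ^ 2)⁻¹))
    (hφ : ∀ k x, φ k x = (k.factorial : ℝ) * f x * (if Even k then Xt k x else X k x)) :
    ∀ K : Set ℂ, IsCompact K →
      (∀ ρ ∈ K, ∀ x ∈ Icc a b,
        Summable (fun k : ℕ =>
          ‖(Complex.I * ρ) ^ k * ((φ k x : ℝ) : ℂ) / ((k.factorial : ℕ) : ℂ)‖)) ∧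
      TendstoUniformlyOn
        (fun n (q : ℂ × ℝ) => ∑ k ∈ Finset.range n,
          (Complex.I * q.1) ^ k * ((φ k q.2 : ℝ) : ℂ) / ((k.factorial : ℕ) : ℂ))
        (fun q => ∑' k : ℕ,
          (Complex.I * q.1) ^ k * ((φ k q.2 : ℝ) : ℂ) / ((k.factorial : ℕ) : ℂ))
        atTop (K ×ˢ Icc a b) := by
  intro K hK
  have hsq : ContinuousOn (fun s => f s ^ 2) (Icc a b) := hcont.pow 2
  have hinv : ContinuousOn (fun s => (f s ^ 2)⁻¹) (Icc a b) :=
    hsq.inv₀ fun s hs => pow_ne_zero 2 (hne s hs)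
  obtain ⟨C₁, hC₁⟩ := isCompact_Icc.exists_bound_of_continuousOn hsq
  obtain ⟨C₂, hC₂⟩ := isCompact_Icc.exists_bound_of_continuousOn hinv
  obtain ⟨M, hM⟩ := isCompact_Icc.exists_bound_of_continuousOn hcont
  set C := max C₁ C₂
  have hsqC : ∀ s ∈ Icc a b, |f s ^ 2| ≤ C := fun s hs => (hC₁ s hs).trans (le_max_left _ _)
  have hinvC : ∀ s ∈ Icc a b, |(f s ^ 2)⁻¹| ≤ C :=
    fun s hs => (hC₂ s hs).trans (le_max_right _ _)
  have hC : 0 ≤ C := (abs_nonneg _).trans (hsqC x₀ hx₀)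
  have hXbound := alternatingIntegral_continuousOn_and_abs_le hx₀ hinv hsq hinvC hsqC X hX0 hX
  have hXtbound := alternatingIntegral_continuousOn_and_abs_le hx₀ hsq hinv hsqC hinvC Xt hXt0 hXt
  refine summable_norm_and_tendstoUniformlyOn_exp_series hK (fun k x => (φ k x : ℂ))
    (M := M) (L := C * (b - a)) fun k x hx => ?_
  rw [Complex.norm_real, Real.norm_eq_abs, hφ]
  refine abs_factorial_mul_mul_le hx₀ hx hC (hM x hx) ?_
  split_ifs
  exacts [(hXtbound k).2 x hx, (hXbound k).2 x hx]

/-- with formal powers `φ_f^{(2k)} = (2k)!·f·X̃^{(2k)}`,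
`φ_f^{(2k+1)} = (2k+1)!·f·X^{(2k+1)}` built from the recursive integrals of a
nonvanishing `f ∈ W^{1,2}`, the SPPS series `Σ (iρ)^k φ_f^{(k)}(x)/k!` converges
absolutely and uniformly for `x ∈ J̄` and uniformly for `ρ` in every compact subset
of `ℂ`. -/
theorem stmt7 (a b x₀ : ℝ) (hab : a < b) (hx₀ : x₀ ∈ Icc a b)
    (f : ℝ → ℝ) (hcont : ContinuousOn f (Icc a b))
    (hne : ∀ x ∈ Icc a b, f x ≠ 0)
    (X Xt : ℕ → ℝ → ℝ) (φ : ℕ → ℝ → ℝ)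
    (hX0 : ∀ x, X 0 x = 1) (hXt0 : ∀ x, Xt 0 x = 1)
    (hX : ∀ k, 1 ≤ k → ∀ x,
      X k x = ∫ s in x₀..x, X (k - 1) s * (if Odd k then (f s ^ 2)⁻¹ else f s ^ 2))
    (hXt : ∀ k, 1 ≤ k → ∀ x,
      Xt k x = ∫ s in x₀..x, Xt (k - 1) s * (if Odd k then f s ^ 2 else (f s ^ 2)⁻¹))
    (hφ : ∀ k x, φ k x = (k.factorial : ℝ) * f x * (if Even k then Xt k x else X k x)) :
    ∀ K : Set ℂ, IsCompact K →
      (∀ ρ ∈ K, ∀ x ∈ Icc a b,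
        Summable (fun k : ℕ =>
          ‖(Complex.I * ρ) ^ k * ((φ k x : ℝ) : ℂ) / ((k.factorial : ℕ) : ℂ)‖)) ∧
      TendstoUniformlyOn
        (fun n (q : ℂ × ℝ) => ∑ k ∈ Finset.range n,
          (Complex.I * q.1) ^ k * ((φ k q.2 : ℝ) : ℂ) / ((k.factorial : ℕ) : ℂ))
        (fun q => ∑' k : ℕ,
          (Complex.I * q.1) ^ k * ((φ k q.2 : ℝ) : ℂ) / ((k.factorial : ℕ) : ℂ))
        atTop (K ×ˢ Icc a b) :=
  stmt7_general a b x₀ hx₀ f hcont hne X Xt φ hX0 hXt0 hX hXt hφ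
end
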